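/- Let p ≥ 2 be a real number, and let x, y be nonnegative functions in L^p(μ) with x ≥ y almost everywhere. Then ‖x+y‖_p^p + ‖x−y‖_p^p ≥ 2(‖x‖_p^p + 2^(p-2)‖y‖_p^p), an improvement of Clarkson's inequality ‖x+y‖_p^p + ‖x−y‖_p^p ≥ 2(‖x‖_p^p + ‖y‖_p^p) since 2^(p-2) ≥ 1. -/

import Mathlib

open MeasureTheory ENNReal

/-!
Integrating a pointwise inequality: for `0 ≤ b ≤ a` and `p ≥ 2`,
`2 a^p + 2^(p-1) b^p ≤ (a + b)^p + (a - b)^p`. At `b = 0` both sides agree, and as a function of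
`b` the right side minus `2^(p-1) b^p` is nondecreasing on `[0, a]`: its derivative is
`p ((a+b)^(p-1) - (a-b)^(p-1) - (2b)^(p-1))`, nonnegative by superadditivity of `s ↦ s^(p-1)`.
-/

lemma le_rpow_add_add_rpow_sub {p a b : ℝ} (hp : 2 ≤ p) (hb : 0 ≤ b) (hba : b ≤ a) :
    2 * a ^ p + 2 ^ (p - 1) * b ^ p ≤ (a + b) ^ p + (a - b) ^ p := by
  have hp1 : 1 ≤ p := by linarith
  let f : ℝ → ℝ := fun t ↦ (a + t) ^ p + (a - t) ^ p - 2 ^ (p - 1) * t ^ p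
  have hf : ∀ t, 0 ≤ t → HasDerivAt f
      (p * ((a + t) ^ (p - 1) - (a - t) ^ (p - 1) - (2 * t) ^ (p - 1))) t := by
    intro t ht
    have hrpow := fun s : ℝ ↦ Real.hasDerivAt_rpow_const (x := s) (Or.inr hp1)
    refine ((((hrpow _).comp t ((hasDerivAt_id t).const_add a)).add
      ((hrpow _).comp t ((hasDerivAt_id t).const_sub a))).sub
      ((hrpow t).const_mul (2 ^ (p - 1)))).congr_deriv ?_
    rw [Real.mul_rpow zero_le_two ht, id]
    ring
  have hmono : MonotoneOn f (Set.Icc 0 a) := by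
    refine monotoneOn_of_hasDerivWithinAt_nonneg (convex_Icc 0 a)
      (fun t ht ↦ (hf t ht.1).continuousAt.continuousWithinAt)
      (fun t ht ↦ (hf t (interior_subset ht).1).hasDerivWithinAt) ?_
    rw [interior_Icc]
    rintro t ⟨ht0, hta⟩
    have := Real.add_rpow_le_rpow_add (sub_nonneg.2 hta.le) (by linarith : 0 ≤ 2 * t)
      (by linarith : 1 ≤ p - 1)
    rw [show a - t + 2 * t = a + t by ring] at this
    have : 0 ≤ (a + t) ^ (p - 1) - (a - t) ^ (p - 1) - (2 * t) ^ (p - 1) := by linarith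
    positivity
  have hf0b := hmono ⟨le_rfl, hb.trans hba⟩ ⟨hb, hba⟩ hb
  simp only [f, add_zero, sub_zero, Real.zero_rpow (by linarith : p ≠ 0), mul_zero] at hf0b
  linarith

lemma le_enorm_rpow_add_add_enorm_rpow_sub {p a b : ℝ} (hp : 2 ≤ p) (hb : 0 ≤ b) (hba : b ≤ a) :
    2 * ‖a‖ₑ ^ p + 2 ^ (p - 1) * ‖b‖ₑ ^ p ≤ ‖a + b‖ₑ ^ p + ‖a - b‖ₑ ^ p := by
  have ha : 0 ≤ a := hb.trans hba
  have hp0 : 0 ≤ p := by linarith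
  have h := ENNReal.ofReal_le_ofReal (le_rpow_add_add_rpow_sub hp hb hba)
  rwa [ENNReal.ofReal_add (by positivity) (by positivity),
    ENNReal.ofReal_add (by positivity) (Real.rpow_nonneg (sub_nonneg.2 hba) _),
    ENNReal.ofReal_mul zero_le_two, ENNReal.ofReal_mul (by positivity),
    ← ENNReal.ofReal_rpow_of_nonneg ha hp0, ← ENNReal.ofReal_rpow_of_nonneg hb hp0,
    ← ENNReal.ofReal_rpow_of_nonneg (by positivity) hp0,
    ← ENNReal.ofReal_rpow_of_nonneg (sub_nonneg.2 hba) hp0,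
    ← ENNReal.ofReal_rpow_of_pos two_pos, ENNReal.ofReal_ofNat,
    ← Real.enorm_of_nonneg ha, ← Real.enorm_of_nonneg hb,
    ← Real.enorm_of_nonneg (by positivity), ← Real.enorm_of_nonneg (sub_nonneg.2 hba)] at h

lemma eLpNorm_ofReal_rpow_eq_lintegral {α ε : Type*} [MeasurableSpace α] [ENorm ε]
    {μ : Measure α} {f : α → ε} {p : ℝ} (hp : 0 < p) :
    eLpNorm f (ENNReal.ofReal p) μ ^ p = ∫⁻ t, ‖f t‖ₑ ^ p ∂μ := by
  rw [eLpNorm_eq_eLpNorm' (ENNReal.ofReal_pos.2 hp).ne' ofReal_ne_top, toReal_ofReal hp.le,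
    lintegral_rpow_enorm_eq_rpow_eLpNorm' hp]

theorem stmt17 {X : Type*} [MeasurableSpace X] (μ : Measure X) (p : ℝ) (hp : 2 ≤ p)
    (x y : X → ℝ) (hx : MemLp x (ENNReal.ofReal p) μ) (hy : MemLp y (ENNReal.ofReal p) μ)
    (h : ∀ᵐ t ∂μ, 0 ≤ y t ∧ y t ≤ x t) :
    eLpNorm (x + y) (ENNReal.ofReal p) μ ^ p + eLpNorm (x - y) (ENNReal.ofReal p) μ ^ p ≥
      2 * (eLpNorm x (ENNReal.ofReal p) μ ^ p +
        (2 : ℝ≥0∞) ^ (p - 2) * eLpNorm y (ENNReal.ofReal p) μ ^ p) := by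
  have hp0 : 0 < p := by linarith
  have hmeas {f : X → ℝ} (hf : AEStronglyMeasurable f μ) :
      AEMeasurable (fun t ↦ ‖f t‖ₑ ^ p) μ := hf.enorm.pow_const p
  have htwo : (2 : ℝ≥0∞) * 2 ^ (p - 2) = 2 ^ (p - 1) := by
    rw [show p - 1 = 1 + (p - 2) by ring, ENNReal.rpow_add _ _ two_ne_zero ofNat_ne_top,
      ENNReal.rpow_one]
  simp only [eLpNorm_ofReal_rpow_eq_lintegral hp0, ge_iff_le, Pi.add_apply, Pi.sub_apply]
  calc 2 * (∫⁻ t, ‖x t‖ₑ ^ p ∂μ + 2 ^ (p - 2) * ∫⁻ t, ‖y t‖ₑ ^ p ∂μ)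
      = ∫⁻ t, 2 * ‖x t‖ₑ ^ p + 2 ^ (p - 1) * ‖y t‖ₑ ^ p ∂μ := by
        rw [lintegral_add_left' ((hmeas hx.1).const_mul 2), lintegral_const_mul'' 2 (hmeas hx.1),
          lintegral_const_mul'' _ (hmeas hy.1), mul_add, ← mul_assoc, htwo]
    _ ≤ ∫⁻ t, ‖x t + y t‖ₑ ^ p + ‖x t - y t‖ₑ ^ p ∂μ :=
        lintegral_mono_ae (h.mono fun t ht ↦ le_enorm_rpow_add_add_enorm_rpow_sub hp ht.1 ht.2)
    _ = ∫⁻ t, ‖x t + y t‖ₑ ^ p ∂μ + ∫⁻ t, ‖x t - y t‖ₑ ^ p ∂μ :=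
        lintegral_add_left' (hmeas (hx.1.add hy.1)) _
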